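/- For all natural numbers n, m ≥ 2, every λ ∈ [−1,1] and every (x,y) ∈ [0,1]×[0,1], the bivariate λ-Bernstein operator satisfies B̄_{n,m}(s²; x,y; λ) = x² + x(1−x)/n + λ[ (2x − 4x² + 2x^{n+1})/(n(n−1)) + (x^{n+1} + (1−x)^{n+1} − 1)/(n²(n−1)) ] and B̄_{n,m}(t²; x,y; λ) = y² + y(1−y)/m + λ[ (2y − 4y² + 2y^{m+1})/(m(m−1)) + (y^{m+1} + (1−y)^{m+1} − 1)/(m²(m−1)) ], where s² and t² denote the functions (s,t) ↦ s² and (s,t) ↦ t². -/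
import Mathlib


open Finset Filter

/-- Bernstein basis polynomial `b_{n,i}(x) = C(n,i) x^i (1-x)^(n-i)`. -/
noncomputable def bern (n i : ℕ) (x : ℝ) : ℝ :=
  (n.choose i : ℝ) * x ^ i * (1 - x) ^ (n - i)

/-- Bézier basis `b̃_{n,i}(λ; x)` with shape parameter `lam`. -/
noncomputable def bez (n : ℕ) (lam x : ℝ) (i : ℕ) : ℝ :=
  if i = 0 then bern n 0 x - lam / ((n : ℝ) + 1) * bern (n + 1) 1 x
  else if i = n then bern n n x - lam / ((n : ℝ) + 1) * bern (n + 1) n x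
  else bern n i x + lam * (((n : ℝ) - 2 * (i : ℝ) + 1) / ((n : ℝ) ^ 2 - 1) * bern (n + 1) i x
    - ((n : ℝ) - 2 * (i : ℝ) - 1) / ((n : ℝ) ^ 2 - 1) * bern (n + 1) (i + 1) x)

/-- The λ-Bernstein operator `B_{n,λ}(f; x) = ∑_{i=0}^n f(i/n) b̃_{n,i}(λ; x)`. -/
noncomputable def lB (n : ℕ) (lam : ℝ) (f : ℝ → ℝ) (x : ℝ) : ℝ :=
  ∑ i ∈ Finset.range (n + 1), f ((i : ℝ) / (n : ℝ)) * bez n lam x i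

/-- The bivariate λ-Bernstein operator
`B̄_{n,m}(f; x, y; λ) = ∑_{k₁=0}^n ∑_{k₂=0}^m f(k₁/n, k₂/m) b̃_{n,k₁}(λ;x) b̃_{m,k₂}(λ;y)`. -/
noncomputable def bivB (n m : ℕ) (lam : ℝ) (f : ℝ → ℝ → ℝ) (x y : ℝ) : ℝ :=
  ∑ k₁ ∈ Finset.range (n + 1), ∑ k₂ ∈ Finset.range (m + 1),
    f ((k₁ : ℝ) / (n : ℝ)) ((k₂ : ℝ) / (m : ℝ)) * bez n lam x k₁ * bez m lam y k₂

lemma bern_eq_eval (n i : ℕ) (x : ℝ) :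
    bern n i x = (bernsteinPolynomial ℝ n i).eval x := by
  simp [bern, bernsteinPolynomial]

lemma bern_sum (n : ℕ) (x : ℝ) : ∑ i ∈ range (n+1), bern n i x = 1 := by
  have h := congrArg (Polynomial.eval x) (bernsteinPolynomial.sum ℝ n)
  simpa [bern_eq_eval, Polynomial.eval_finset_sum] using h

lemma bern_sum_mul (n : ℕ) (x : ℝ) :
    ∑ i ∈ range (n+1), (i:ℝ) * bern n i x = (n:ℝ) * x := by
  have h := congrArg (Polynomial.eval x) (bernsteinPolynomial.sum_smul ℝ n)
  simpa [bern_eq_eval, Polynomial.eval_finset_sum, mul_comm] using h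

lemma bern_sum_sq (n : ℕ) (x : ℝ) :
    ∑ i ∈ range (n+1), (i:ℝ)^2 * bern n i x
      = ((n:ℝ)^2 - n) * x^2 + (n:ℝ) * x := by
  have h := congrArg (Polynomial.eval x) (bernsteinPolynomial.sum_mul_smul ℝ n)
  have h2 : ∑ i ∈ range (n+1), ((i*(i-1) : ℕ) : ℝ) * bern n i x
      = ((n*(n-1) : ℕ) : ℝ) * x^2 := by
    simpa [bern_eq_eval, Polynomial.eval_finset_sum, mul_comm] using h
  have cast_fact : ∀ i : ℕ, ((i*(i-1) : ℕ) : ℝ) = (i:ℝ)^2 - (i:ℝ) := by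
    intro i
    cases i with
    | zero => simp
    | succ k => push_cast [Nat.succ_sub_one]; ring
  have h3 : ∑ i ∈ range (n+1), ((i:ℝ)^2 - (i:ℝ)) * bern n i x
      = ((n:ℝ)^2 - (n:ℝ)) * x^2 := by
    calc ∑ i ∈ range (n+1), ((i:ℝ)^2 - (i:ℝ)) * bern n i x
        = ∑ i ∈ range (n+1), ((i*(i-1) : ℕ) : ℝ) * bern n i x := by
          exact Finset.sum_congr rfl fun i _ => by rw [cast_fact]
      _ = _ := by rw [h2, cast_fact]
  have h4 := bern_sum_mul n x
  have h5 : ∑ i ∈ range (n+1), ((i:ℝ)^2 - (i:ℝ)) * bern n i x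
      = ∑ i ∈ range (n+1), (i:ℝ)^2 * bern n i x
        - ∑ i ∈ range (n+1), (i:ℝ) * bern n i x := by
    rw [← Finset.sum_sub_distrib]; exact Finset.sum_congr rfl fun i _ => by ring
  rw [h5, h4] at h3
  linarith

lemma bern_zero (n : ℕ) (x : ℝ) : bern n 0 x = (1-x)^n := by simp [bern]

lemma bern_last (n : ℕ) (x : ℝ) : bern n n x = x^n := by simp [bern]

lemma bez_expand (n : ℕ) (hn : 2 ≤ n) (lam x : ℝ) (c : ℕ → ℝ) :
    ∑ i ∈ range (n+1), c i * bez n lam x i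
      = ∑ i ∈ range (n+1), c i * bern n i x
        + lam * ∑ j ∈ range n,
            (c (j+1) - c j) * (((n:ℝ) - 2*((j:ℝ)+1) + 1)/((n:ℝ)^2 - 1)) * bern (n+1) (j+1) x := by
  obtain ⟨d, rfl⟩ : ∃ d, n = d + 2 := ⟨n - 2, by omega⟩
  have hd : (0:ℝ) ≤ (d:ℝ) := Nat.cast_nonneg d
  set N : ℝ := (d:ℝ) + 2 with hN
  have hc : ((d+2:ℕ):ℝ) = N := by push_cast [hN]; ring
  have h1 : N + 1 ≠ 0 := by positivity
  have h1' : N - 1 ≠ 0 := by rw [hN]; intro h; linarith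
  have h2 : N^2 - 1 ≠ 0 := by
    have e : N^2 - 1 = (N-1)*(N+1) := by ring
    rw [e]; exact mul_ne_zero h1' h1
  set A : ℕ → ℝ := fun j => (N - 2*(j:ℝ) + 1)/(N^2 - 1) with hA
  rw [hc]
  simp only [show d+2+1 = d+3 from rfl]
  have bez0 : bez (d+2) lam x 0 = bern (d+2) 0 x - lam / (N+1) * bern (d+3) 1 x := by
    simp [bez, hN]
  have bezn : bez (d+2) lam x (d+2)
      = bern (d+2) (d+2) x - lam / (N+1) * bern (d+3) (d+2) x := by
    simp [bez, hN]
  have bezmid : ∀ j ∈ range (d+1),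
      bez (d+2) lam x (j+1)
        = bern (d+2) (j+1) x
          + lam * (A (j+1) * bern (d+3) (j+1) x - A (j+2) * bern (d+3) (j+2) x) := by
    intro j hj
    have hj' : j < d + 1 := mem_range.1 hj
    have hne : j + 1 ≠ d + 2 := by omega
    simp only [bez, hA, if_neg (Nat.succ_ne_zero j), if_neg hne, hc]
    rw [show d+2+1 = d+3 from rfl, show j+1+1 = j+2 from rfl]
    push_cast
    ring
  have expL : ∑ i ∈ range (d+2+1), c i * bez (d+2) lam x i
      = (c 0 * bez (d+2) lam x 0 + c (d+2) * bez (d+2) lam x (d+2))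
        + ∑ j ∈ range (d+1), c (j+1) * bez (d+2) lam x (j+1) := by
    rw [Finset.sum_range_succ, Finset.sum_range_succ']
    ring
  have expB : ∑ i ∈ range (d+2+1), c i * bern (d+2) i x
      = (c 0 * bern (d+2) 0 x + c (d+2) * bern (d+2) (d+2) x)
        + ∑ j ∈ range (d+1), c (j+1) * bern (d+2) (j+1) x := by
    rw [Finset.sum_range_succ, Finset.sum_range_succ']
    ring
  have sumMid : ∑ j ∈ range (d+1), c (j+1) * bez (d+2) lam x (j+1)
      = (∑ j ∈ range (d+1), c (j+1) * bern (d+2) (j+1) x)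
        + lam * ((∑ j ∈ range (d+1), c (j+1) * (A (j+1) * bern (d+3) (j+1) x))
                 - ∑ j ∈ range (d+1), c (j+1) * (A (j+2) * bern (d+3) (j+2) x)) := by
    rw [← Finset.sum_sub_distrib, Finset.mul_sum, ← Finset.sum_add_distrib]
    refine Finset.sum_congr rfl fun j hj => ?_
    rw [bezmid j hj]; ring
  have expR : ∑ j ∈ range (d+2),
        (c (j+1) - c j) * ((N - 2*((j:ℝ)+1) + 1)/(N^2 - 1)) * bern (d+3) (j+1) x
      = (∑ j ∈ range (d+1), c (j+1) * (A (j+1) * bern (d+3) (j+1) x))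
        - (∑ j ∈ range (d+1), c (j+1) * (A (j+2) * bern (d+3) (j+2) x))
        + c (d+2) * (A (d+2) * bern (d+3) (d+2) x)
        - c 0 * (A 1 * bern (d+3) 1 x) := by
    have e1 : ∀ j : ℕ,
        (c (j+1) - c j) * ((N - 2*((j:ℝ)+1) + 1)/(N^2 - 1)) * bern (d+3) (j+1) x
        = c (j+1) * (A (j+1) * bern (d+3) (j+1) x)
          - c j * (A (j+1) * bern (d+3) (j+1) x) := by
      intro j; simp only [hA]; push_cast; ring
    rw [Finset.sum_congr rfl fun j _ => e1 j, Finset.sum_sub_distrib,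
      Finset.sum_range_succ (fun j => c (j+1) * (A (j+1) * bern (d+3) (j+1) x)) (d+1),
      Finset.sum_range_succ' (fun j => c j * (A (j+1) * bern (d+3) (j+1) x)) (d+1)]
    simp only [show ∀ k:ℕ, k+1+1 = k+2 from fun k => rfl, show (0:ℕ)+1 = 1 from rfl]
    ring
  have hA1 : A 1 = 1 / (N+1) := by
    simp only [hA]
    rw [div_eq_div_iff h2 h1]
    push_cast; ring
  have hAn : A (d+2) = -(1 / (N+1)) := by
    simp only [hA, hc]
    rw [div_eq_iff h2]
    field_simp
    ring
  rw [expL, expB, sumMid, expR, bez0, bezn, hA1, hAn]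
  ring

lemma sum_bez (n : ℕ) (hn : 2 ≤ n) (lam x : ℝ) :
    ∑ i ∈ range (n+1), bez n lam x i = 1 := by
  have h := bez_expand n hn lam x (fun _ => 1)
  simpa [bern_sum] using h

lemma lB_sq (n : ℕ) (hn : 2 ≤ n) (lam x : ℝ) :
    ∑ i ∈ range (n+1), ((i:ℝ)/(n:ℝ))^2 * bez n lam x i
      = x^2 + x*(1-x)/(n:ℝ)
        + lam * ((2*x - 4*x^2 + 2*x^(n+1))/((n:ℝ)*((n:ℝ)-1))
          + (x^(n+1) + (1-x)^(n+1) - 1)/((n:ℝ)^2*((n:ℝ)-1))) := by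
  have h2 : (2:ℝ) ≤ (n:ℝ) := by exact_mod_cast hn
  have hn0 : (n:ℝ) ≠ 0 := by linarith
  have hn1 : (n:ℝ) - 1 ≠ 0 := by intro h; linarith
  have hp1 : (n:ℝ) + 1 ≠ 0 := by linarith
  have hsq : (n:ℝ)^2 - 1 ≠ 0 := by
    have e : (n:ℝ)^2 - 1 = ((n:ℝ)-1)*((n:ℝ)+1) := by ring
    rw [e]; exact mul_ne_zero hn1 hp1
  rw [bez_expand n hn lam x (fun i => ((i:ℝ)/(n:ℝ))^2)]
  -- Bernstein part
  have hb : ∑ i ∈ range (n+1), ((i:ℝ)/(n:ℝ))^2 * bern n i x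
      = (((n:ℝ)^2 - n)*x^2 + (n:ℝ)*x)/(n:ℝ)^2 := by
    rw [← bern_sum_sq n x, Finset.sum_div]
    refine Finset.sum_congr rfl fun i _ => ?_
    field_simp
  -- the telescoped sum
  set g : ℕ → ℝ := fun k =>
    ((-4)*(k:ℝ)^2 + (2*(n:ℝ)+4)*(k:ℝ) - ((n:ℝ)+1)) * bern (n+1) k x with hg
  have big : ∑ k ∈ range (n+2), g k
      = (-4)*((((n:ℝ)+1)^2 - ((n:ℝ)+1))*x^2 + ((n:ℝ)+1)*x)
        + (2*(n:ℝ)+4)*(((n:ℝ)+1)*x) - ((n:ℝ)+1) := by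
    have e0 := bern_sum (n+1) x
    have e1 := bern_sum_mul (n+1) x
    have e2 := bern_sum_sq (n+1) x
    push_cast at e1 e2
    have split : ∀ k : ℕ, g k
        = (-4)*((k:ℝ)^2 * bern (n+1) k x) + (2*(n:ℝ)+4)*((k:ℝ) * bern (n+1) k x)
          + (-((n:ℝ)+1))*(bern (n+1) k x) := by
      intro k; simp only [hg]; ring
    rw [show (n+2) = (n+1)+1 from rfl, Finset.sum_congr rfl fun k _ => split k,
      Finset.sum_add_distrib, Finset.sum_add_distrib,
      ← Finset.mul_sum, ← Finset.mul_sum, ← Finset.mul_sum, e0, e1, e2]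
    ring
  have peel : ∑ j ∈ range n, g (j+1)
      = ∑ k ∈ range (n+2), g k - g 0 - g (n+1) := by
    have p1 := Finset.sum_range_succ' g (n+1)
    have p2 := Finset.sum_range_succ (fun j => g (j+1)) n
    rw [show (n+2) = (n+1)+1 from rfl, p1, p2]
    ring
  have hT : ∑ j ∈ range n,
        (((((j:ℕ)+1:ℕ):ℝ)/(n:ℝ))^2 - (((j:ℕ):ℝ)/(n:ℝ))^2)
          * (((n:ℝ) - 2*((j:ℝ)+1) + 1)/((n:ℝ)^2 - 1)) * bern (n+1) (j+1) x
      = (∑ j ∈ range n, g (j+1)) / ((n:ℝ)^2 * ((n:ℝ)^2 - 1)) := by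
    rw [Finset.sum_div]
    refine Finset.sum_congr rfl fun j _ => ?_
    simp only [hg]
    rw [eq_div_iff (mul_ne_zero (pow_ne_zero 2 hn0) hsq)]
    push_cast
    field_simp
    ring_nf
  rw [hb, hT, peel, big]
  simp only [hg, bern_zero, bern_last]
  push_cast
  field_simp
  ring

/-- the bivariate λ-Bernstein operator on the test functions
`(s,t) ↦ s²` and `(s,t) ↦ t²`. -/
theorem bivB_square_test_functions (n m : ℕ) (hn : 2 ≤ n) (hm : 2 ≤ m) (lam : ℝ)
    (hlam : lam ∈ Set.Icc (-1 : ℝ) 1) (x y : ℝ)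
    (hx : x ∈ Set.Icc (0 : ℝ) 1) (hy : y ∈ Set.Icc (0 : ℝ) 1) :
    bivB n m lam (fun s _ => s ^ 2) x y =
      x ^ 2 + x * (1 - x) / (n : ℝ) +
        lam * ((2 * x - 4 * x ^ 2 + 2 * x ^ (n + 1)) / ((n : ℝ) * ((n : ℝ) - 1))
          + (x ^ (n + 1) + (1 - x) ^ (n + 1) - 1) / ((n : ℝ) ^ 2 * ((n : ℝ) - 1))) ∧
    bivB n m lam (fun _ t => t ^ 2) x y =
      y ^ 2 + y * (1 - y) / (m : ℝ) +
        lam * ((2 * y - 4 * y ^ 2 + 2 * y ^ (m + 1)) / ((m : ℝ) * ((m : ℝ) - 1))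
          + (y ^ (m + 1) + (1 - y) ^ (m + 1) - 1) / ((m : ℝ) ^ 2 * ((m : ℝ) - 1))) := by
  constructor
  · have fact : bivB n m lam (fun s _ => s ^ 2) x y
        = (∑ k₁ ∈ range (n+1), ((k₁:ℝ)/(n:ℝ))^2 * bez n lam x k₁)
          * (∑ k₂ ∈ range (m+1), bez m lam y k₂) := by
      unfold bivB
      rw [Finset.sum_mul_sum]
    rw [fact, sum_bez m hm, mul_one]
    exact lB_sq n hn lam x
  · have fact : bivB n m lam (fun _ t => t ^ 2) x y
        = (∑ k₁ ∈ range (n+1), bez n lam x k₁)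
          * (∑ k₂ ∈ range (m+1), ((k₂:ℝ)/(m:ℝ))^2 * bez m lam y k₂) := by
      unfold bivB
      rw [Finset.sum_mul_sum]
      exact Finset.sum_congr rfl fun k₁ _ => Finset.sum_congr rfl fun k₂ _ => by ring
    rw [fact, sum_bez n hn, one_mul]
    exact lB_sq m hm lam y
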